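/- Let s > 0, K_x ≥ 0, let P be a real d×d matrix, and let x ∈ B_s^d with x ≠ 0, Px ≠ 0 and d_s(0, x) ≤ K_x. Then the Lorentz gamma factor of P^{⊗_s} x satisfies γ_{P^{⊗_s} x} = 1/√(1 − ‖P^{⊗_s} x‖²/s²) ≤ exp(‖P‖_F² · K_x² / (8s²)). -/

import Mathlib

open Real MeasureTheory

/-- Inverse hyperbolic tangent on `(-1, 1)`. -/
noncomputable def Real.artanhLocal (x : ℝ) : ℝ := (1 / 2) * Real.log ((1 + x) / (1 - x))

/-- Matrix-vector multiplication viewed as a map between Euclidean spaces. -/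
noncomputable def mulVecE {d d' : ℕ} (P : Matrix (Fin d') (Fin d) ℝ)
    (x : EuclideanSpace ℝ (Fin d)) : EuclideanSpace ℝ (Fin d') :=
  (EuclideanSpace.equiv (Fin d') ℝ).symm (P.mulVec (EuclideanSpace.equiv (Fin d) ℝ x))

/-- Möbius matrix multiplication `P^{⊗_s} x` on the Poincaré ball of radius `s`.
When `P.mulVec x = 0` this evaluates to `0`, as required. -/
noncomputable def mobiusMat {d d' : ℕ} (s : ℝ) (P : Matrix (Fin d') (Fin d) ℝ)
    (x : EuclideanSpace ℝ (Fin d)) : EuclideanSpace ℝ (Fin d') :=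
  (s * Real.tanh ((‖mulVecE P x‖ / ‖x‖) * Real.artanhLocal (‖x‖ / s)) / ‖mulVecE P x‖) • mulVecE P x

/-- Frobenius norm of a real matrix. -/
noncomputable def frobNorm {m n : ℕ} (P : Matrix (Fin m) (Fin n) ℝ) : ℝ :=
  Real.sqrt (∑ i, ∑ j, (P i j) ^ 2)

/-- Lorentz gamma factor `γ_x = 1/√(1 - ‖x‖²/s²)`. -/
noncomputable def lorentzGamma {d : ℕ} (s : ℝ) (x : EuclideanSpace ℝ (Fin d)) : ℝ :=
  1 / Real.sqrt (1 - ‖x‖ ^ 2 / s ^ 2)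

/-- Poincaré distance `d_s(x,y) = 2s·arsinh(γ_x γ_y ‖x - y‖ / s)`. -/
noncomputable def dPoin {d : ℕ} (s : ℝ) (x y : EuclideanSpace ℝ (Fin d)) : ℝ :=
  2 * s * Real.arsinh (lorentzGamma s x * lorentzGamma s y * ‖x - y‖ / s)

/-- Möbius addition on the Poincaré ball of radius `s`. -/
noncomputable def mobiusAdd {d : ℕ} (s : ℝ) (x y : EuclideanSpace ℝ (Fin d)) :
    EuclideanSpace ℝ (Fin d) :=
  ((1 + 2 / s ^ 2 * (inner ℝ x y : ℝ) + 1 / s ^ 2 * ‖y‖ ^ 2) /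
      (1 + 2 / s ^ 2 * (inner ℝ x y : ℝ) + 1 / s ^ 4 * ‖x‖ ^ 2 * ‖y‖ ^ 2)) • x +
    ((1 - 1 / s ^ 2 * ‖x‖ ^ 2) /
      (1 + 2 / s ^ 2 * (inner ℝ x y : ℝ) + 1 / s ^ 4 * ‖x‖ ^ 2 * ‖y‖ ^ 2)) • y

/-- Exponential map at the origin of the Poincaré ball of radius `s`. -/
noncomputable def expZero {d : ℕ} (s : ℝ) (v : EuclideanSpace ℝ (Fin d)) :
    EuclideanSpace ℝ (Fin d) :=
  (s * Real.tanh (‖v‖ / s) / ‖v‖) • v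

/-- Logarithmic map at the origin of the Poincaré ball of radius `s`. -/
noncomputable def logZero {d : ℕ} (s : ℝ) (y : EuclideanSpace ℝ (Fin d)) :
    EuclideanSpace ℝ (Fin d) :=
  (s * Real.artanhLocal (‖y‖ / s) / ‖y‖) • y

/-!
Möbius matrix multiplication rescales the rapidity: `‖P^{⊗_s} x‖ = s·tanh t` with
`t = (‖Px‖/‖x‖)·artanh(‖x‖/s)`, so the gamma factor of `P^{⊗_s} x` is `cosh t ≤ exp (t²/2)`.
Since `‖Px‖ ≤ ‖P‖_F ‖x‖` and `2s·artanh(‖x‖/s) = d_s(0, x) ≤ K_x`, we get `t ≤ ‖P‖_F K_x / (2s)`.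
-/

section Frobenius

attribute [local instance] Matrix.frobeniusSeminormedAddCommGroup

theorem frobNorm_eq_norm {m n : ℕ} (P : Matrix (Fin m) (Fin n) ℝ) : frobNorm P = ‖P‖ := by
  rw [frobNorm, Matrix.frobenius_norm_def, Real.sqrt_eq_rpow]
  simp only [Real.norm_eq_abs, Real.rpow_two, sq_abs]

theorem norm_mulVecE_le {m n : ℕ} (P : Matrix (Fin m) (Fin n) ℝ) (x : EuclideanSpace ℝ (Fin n)) :
    ‖mulVecE P x‖ ≤ frobNorm P * ‖x‖ :=
  calc ‖mulVecE P x‖ = ‖Matrix.replicateCol (Fin 1) (P.mulVec x.ofLp)‖ :=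
        (Matrix.frobenius_norm_replicateCol _).symm
    _ ≤ ‖P‖ * ‖Matrix.replicateCol (Fin 1) x.ofLp‖ := by
        rw [Matrix.replicateCol_mulVec]; exact Matrix.frobenius_norm_mul _ _
    _ = frobNorm P * ‖x‖ := by
        rw [frobNorm_eq_norm]; exact congrArg _ (Matrix.frobenius_norm_replicateCol _)

end Frobenius

theorem artanhLocal_nonneg {r : ℝ} (h0 : 0 ≤ r) (h1 : r ≤ 1) : 0 ≤ artanhLocal r := by
  rw [artanhLocal, ← artanh_eq_half_log ⟨by linarith, h1⟩]
  exact artanh_nonneg h0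

theorem one_div_sqrt_one_sub_tanh_sq (t : ℝ) : 1 / √(1 - tanh t ^ 2) = cosh t := by
  rw [← cosh_artanh ⟨neg_one_lt_tanh t, tanh_lt_one t⟩, artanh_tanh]

theorem lorentzGamma_eq_cosh {d : ℕ} {s t : ℝ} (hs : s ≠ 0) {y : EuclideanSpace ℝ (Fin d)}
    (hy : ‖y‖ = |s * tanh t|) : lorentzGamma s y = cosh t := by
  rw [lorentzGamma, hy, sq_abs, mul_pow, mul_div_cancel_left₀ _ (pow_ne_zero 2 hs),
    one_div_sqrt_one_sub_tanh_sq]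

theorem norm_mobiusMat {d d' : ℕ} (s : ℝ) (P : Matrix (Fin d') (Fin d) ℝ)
    (x : EuclideanSpace ℝ (Fin d)) :
    ‖mobiusMat s P x‖ = |s * tanh (‖mulVecE P x‖ / ‖x‖ * artanhLocal (‖x‖ / s))| := by
  by_cases hPx : mulVecE P x = 0
  · simp [mobiusMat, hPx]
  · rw [mobiusMat, norm_smul, Real.norm_eq_abs, abs_div, abs_norm,
      div_mul_cancel₀ _ (norm_ne_zero_iff.2 hPx)]

theorem lorentzGamma_mobiusMat {d d' : ℕ} {s : ℝ} (hs : s ≠ 0) (P : Matrix (Fin d') (Fin d) ℝ)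
    (x : EuclideanSpace ℝ (Fin d)) :
    lorentzGamma s (mobiusMat s P x) = cosh (‖mulVecE P x‖ / ‖x‖ * artanhLocal (‖x‖ / s)) :=
  lorentzGamma_eq_cosh hs (norm_mobiusMat s P x)

theorem stmt5_general {d : ℕ} (s Kx : ℝ) (hs : 0 < s)
    (P : Matrix (Fin d) (Fin d) ℝ) (x : EuclideanSpace ℝ (Fin d))
    (hxball : ‖x‖ < s)
    (hdx : 2 * s * Real.artanhLocal (‖x‖ / s) ≤ Kx) :
    lorentzGamma s (mobiusMat s P x) ≤ Real.exp (frobNorm P ^ 2 * Kx ^ 2 / (8 * s ^ 2)) := by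
  set a := artanhLocal (‖x‖ / s)
  set t := ‖mulVecE P x‖ / ‖x‖ * a
  have ha : 0 ≤ a := artanhLocal_nonneg (by positivity) ((div_le_one hs).2 hxball.le)
  have ht : 0 ≤ t := mul_nonneg (by positivity) ha
  have htK : t ≤ frobNorm P * Kx / (2 * s) :=
    calc t ≤ frobNorm P * a :=
          mul_le_mul_of_nonneg_right (div_le_of_le_mul₀ (norm_nonneg x)
            (Real.sqrt_nonneg _) (norm_mulVecE_le P x)) ha
      _ ≤ frobNorm P * (Kx / (2 * s)) :=
          mul_le_mul_of_nonneg_left ((le_div_iff₀ (by positivity)).2 (by linarith))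
            (Real.sqrt_nonneg _)
      _ = frobNorm P * Kx / (2 * s) := (mul_div_assoc _ _ _).symm
  rw [lorentzGamma_mobiusMat hs.ne']
  calc cosh t ≤ exp (t ^ 2 / 2) := cosh_le_exp_half_sq t
    _ ≤ exp (frobNorm P ^ 2 * Kx ^ 2 / (8 * s ^ 2)) := by
        refine exp_le_exp.2 ?_
        calc t ^ 2 / 2 ≤ (frobNorm P * Kx / (2 * s)) ^ 2 / 2 := by gcongr
          _ = frobNorm P ^ 2 * Kx ^ 2 / (8 * s ^ 2) := by ring

/-- Upper bound on the Lorentz gamma factor of `P^{⊗_s} x`. -/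
theorem stmt5 {d : ℕ} (s Kx : ℝ) (hs : 0 < s) (hKx : 0 ≤ Kx)
    (P : Matrix (Fin d) (Fin d) ℝ) (x : EuclideanSpace ℝ (Fin d))
    (hx0 : x ≠ 0) (hxball : ‖x‖ < s) (hPx : mulVecE P x ≠ 0)
    (hdx : 2 * s * Real.artanhLocal (‖x‖ / s) ≤ Kx) :
    lorentzGamma s (mobiusMat s P x) ≤ Real.exp (frobNorm P ^ 2 * Kx ^ 2 / (8 * s ^ 2)) :=
  stmt5_general s Kx hs P x hxball hdx
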